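/- For all integers m, n ≥ 0, gcd(122^m − 307^n, 3·5·11·13) > 1; indeed 3 divides 122^m − 307^n when m ≡ 0 (mod 2), 11 divides it when n ≡ 0 (mod 2), 5 divides it when m ≡ n (mod 4), and 13 divides it when m ≡ −n (mod 4). -/

import Mathlib

/-! Modulo 3, 11, 5 and 13 the bases reduce to `122 ≡ -1, 307 ≡ 1`; `122 ≡ 1, 307 ≡ -1`;
`122 ≡ 307` of order 4; and `122 ≡ 307⁻¹` of order 4. So `122^m ≡ 307^n` modulo these primes
when `m` is even, `n` is even, `m ≡ n (mod 4)` and `m ≡ -n (mod 4)` respectively, and these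
four classes cover all pairs: if `m` and `n` are both odd then `m - n` is even, hence
`m ± n` is divisible by 4 for one of the signs. -/

lemma pow_eq_pow_of_mul_eq_one {M : Type*} [CommMonoid M] {a b : M} {k m n : ℕ}
    (hab : a * b = 1) (ha : a ^ k = 1) (hmn : k ∣ m + n) : a ^ m = b ^ n := by
  obtain ⟨j, hj⟩ := hmn
  calc a ^ m = a ^ m * (a * b) ^ n := by rw [hab, one_pow, mul_one]
    _ = (a ^ k) ^ j * b ^ n := by rw [mul_pow, ← mul_assoc, ← pow_add, hj, pow_mul]
    _ = b ^ n := by rw [ha, one_pow, one_mul]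

lemma Int.dvd_pow_sub_pow_of_zmod {p : ℕ} {x y : ℤ} {m n : ℕ}
    (h : (x : ZMod p) ^ m = (y : ZMod p) ^ n) : (p : ℤ) ∣ x ^ m - y ^ n :=
  (ZMod.intCast_eq_intCast_iff_dvd_sub _ _ _).1 (by push_cast; exact h.symm)

lemma Int.one_lt_gcd_of_dvd {p : ℕ} (hp : 1 < p) {a b : ℤ} (hb : b ≠ 0)
    (hpa : (p : ℤ) ∣ a) (hpb : (p : ℤ) ∣ b) : 1 < Int.gcd a b :=
  hp.trans_le <| Nat.le_of_dvd (Int.gcd_pos_of_ne_zero_right a hb)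
    (Int.ofNat_dvd.mp (Int.dvd_coe_gcd hpa hpb))

lemma even_or_even_or_modEq_or_dvd_add (m n : ℕ) :
    2 ∣ m ∨ 2 ∣ n ∨ m ≡ n [MOD 4] ∨ 4 ∣ m + n := by
  unfold Nat.ModEq
  omega

section Covering

variable {m n : ℕ}

lemma three_dvd_122_pow_sub_307_pow (h : 2 ∣ m) : (3 : ℤ) ∣ 122 ^ m - 307 ^ n :=
  Int.dvd_pow_sub_pow_of_zmod <| by
    push_cast
    rw [pow_eq_pow_of_modEq (Nat.modEq_zero_iff_dvd.2 h) (by decide : (122 : ZMod 3) ^ 2 = 1),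
      show (307 : ZMod 3) = 1 by decide, one_pow, pow_zero]

lemma eleven_dvd_122_pow_sub_307_pow (h : 2 ∣ n) : (11 : ℤ) ∣ 122 ^ m - 307 ^ n :=
  Int.dvd_pow_sub_pow_of_zmod <| by
    push_cast
    rw [pow_eq_pow_of_modEq (Nat.modEq_zero_iff_dvd.2 h) (by decide : (307 : ZMod 11) ^ 2 = 1),
      show (122 : ZMod 11) = 1 by decide, one_pow, pow_zero]

lemma five_dvd_122_pow_sub_307_pow (h : m ≡ n [MOD 4]) : (5 : ℤ) ∣ 122 ^ m - 307 ^ n :=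
  Int.dvd_pow_sub_pow_of_zmod <| by
    push_cast
    rw [pow_eq_pow_of_modEq h (by decide : (122 : ZMod 5) ^ 4 = 1),
      show (122 : ZMod 5) = 307 by decide]

lemma thirteen_dvd_122_pow_sub_307_pow (h : 4 ∣ m + n) : (13 : ℤ) ∣ 122 ^ m - 307 ^ n :=
  Int.dvd_pow_sub_pow_of_zmod <| by
    push_cast
    exact pow_eq_pow_of_mul_eq_one (by decide : (122 : ZMod 13) * 307 = 1) (by decide) h

end Covering

/-- For all `m, n ≥ 0`, `gcd(122^m - 307^n, 3·5·11·13) > 1`; indeed `3` divides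
`122^m - 307^n` when `m ≡ 0 (mod 2)`, `11` divides it when `n ≡ 0 (mod 2)`, `5`
divides it when `m ≡ n (mod 4)`, and `13` divides it when `m ≡ -n (mod 4)`. -/
theorem covering_example_122_307 :
    ∀ m n : ℕ,
      1 < Int.gcd ((122 : ℤ) ^ m - (307 : ℤ) ^ n) (3 * 5 * 11 * 13) ∧
      (2 ∣ m → (3 : ℤ) ∣ (122 : ℤ) ^ m - (307 : ℤ) ^ n) ∧
      (2 ∣ n → (11 : ℤ) ∣ (122 : ℤ) ^ m - (307 : ℤ) ^ n) ∧
      (m ≡ n [MOD 4] → (5 : ℤ) ∣ (122 : ℤ) ^ m - (307 : ℤ) ^ n) ∧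
      (4 ∣ m + n → (13 : ℤ) ∣ (122 : ℤ) ^ m - (307 : ℤ) ^ n) := by
  intro m n
  refine ⟨?_, three_dvd_122_pow_sub_307_pow, eleven_dvd_122_pow_sub_307_pow,
    five_dvd_122_pow_sub_307_pow, thirteen_dvd_122_pow_sub_307_pow⟩
  have hN : (3 * 5 * 11 * 13 : ℤ) ≠ 0 := by norm_num
  rcases even_or_even_or_modEq_or_dvd_add m n with h | h | h | h
  · exact Int.one_lt_gcd_of_dvd (by norm_num) hN (three_dvd_122_pow_sub_307_pow h) (by norm_num)
  · exact Int.one_lt_gcd_of_dvd (by norm_num) hN (eleven_dvd_122_pow_sub_307_pow h) (by norm_num)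
  · exact Int.one_lt_gcd_of_dvd (by norm_num) hN (five_dvd_122_pow_sub_307_pow h) (by norm_num)
  · exact Int.one_lt_gcd_of_dvd (by norm_num) hN (thirteen_dvd_122_pow_sub_307_pow h) (by norm_num)
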